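/- Let p ∈ (1,∞) and q = p/(p−1), and let X be a real Banach space with continuous dual X*. Suppose that X* satisfies the hypercube Stein inequality with constant 𝔰 for exponent q, and that X* satisfies the Rademacher projection bound with constant K for exponent q, i.e., for every positive integer n and every G : 𝒞_n → X*, ‖Rad G‖_{L_q(𝒞_n;X*)} ≤ K ‖G‖_{L_q(𝒞_n;X*)}, where Rad G = Σ_{i=1}^n Ĝ({i}) w_{{i}}. Then X satisfies the hypercube Stein inequality with constant K·𝔰 for exponent p; that is, for every positive integer n, every permutation π of {1,…,n} and all f_1,…,f_n : 𝒞_n → X, (2^{−n} Σ_{δ∈𝒞_n} ‖Σ_{i=1}^n δ_i 𝔈_i^π f_i‖_{L_p(𝒞_n;X)}^p)^{1/p} ≤ K𝔰 (2^{−n} Σ_{δ∈𝒞_n} ‖Σ_{i=1}^n δ_i f_i‖_{L_p(𝒞_n;X)}^p)^{1/p}. -/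

import Mathlib

noncomputable section

open Finset

/-- The sign `±1` attached to a boolean coordinate of the discrete cube. -/
def sgn (b : Bool) : ℝ := if b then 1 else -1

variable {X : Type*} [NormedAddCommGroup X] [NormedSpace ℝ X]

/-- `L_p` norm of `f : 𝒞_n → X` with respect to the uniform probability measure. -/
def cubeLpNorm (n : ℕ) (p : ℝ) (f : (Fin n → Bool) → X) : ℝ :=
  (((2 : ℝ) ^ n)⁻¹ * ∑ ε : Fin n → Bool, ‖f ε‖ ^ p) ^ (1 / p)

/-- Conditional expectation given the coordinates in `S`: average of `f η` over all
`η` agreeing with `ε` on `S`. -/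
def cubeCondExp (n : ℕ) (S : Finset (Fin n)) (f : (Fin n → Bool) → X) :
    (Fin n → Bool) → X := fun ε =>
  ((2 : ℝ) ^ (n - S.card))⁻¹ •
    ∑ η ∈ univ.filter (fun η : Fin n → Bool => ∀ j ∈ S, η j = ε j), f η

/-- The set of the first `i` coordinates (`0`-based). -/
def firstIdx (n i : ℕ) : Finset (Fin n) := univ.filter fun j => (j : ℕ) < i

/-- `𝔈_i`: conditioning on the first `i` coordinates. -/
def Ei (n i : ℕ) (f : (Fin n → Bool) → X) : (Fin n → Bool) → X :=
  cubeCondExp n (firstIdx n i) f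

/-- `𝔈_i^π`: conditioning on the coordinates `π(1),…,π(i)`. -/
def Epi (n : ℕ) (π : Equiv.Perm (Fin n)) (i : ℕ) (f : (Fin n → Bool) → X) :
    (Fin n → Bool) → X :=
  cubeCondExp n ((firstIdx n i).image π) f

/-- `∂_i`: the `i`-th discrete partial derivative. -/
def cubeDeriv (n : ℕ) (i : Fin n) (f : (Fin n → Bool) → X) : (Fin n → Bool) → X :=
  fun ε => (2 : ℝ)⁻¹ • (f ε - f (Function.update ε i (!(ε i))))

/-- `X` satisfies the hypercube Stein inequality with constant `s` for exponent `p`. -/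
def SteinIneq (X : Type*) [NormedAddCommGroup X] [NormedSpace ℝ X] (p s : ℝ) : Prop :=
  ∀ m : ℕ, 0 < m → ∀ (π : Equiv.Perm (Fin m)) (g : Fin m → (Fin m → Bool) → X),
    (((2 : ℝ) ^ m)⁻¹ * ∑ δ : Fin m → Bool,
        (cubeLpNorm m p fun ε => ∑ i : Fin m, sgn (δ i) • Epi m π ((i : ℕ) + 1) (g i) ε) ^ p) ^ (1 / p)
      ≤ s * (((2 : ℝ) ^ m)⁻¹ * ∑ δ : Fin m → Bool,
        (cubeLpNorm m p fun ε => ∑ i : Fin m, sgn (δ i) • g i ε) ^ p) ^ (1 / p)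

/-- `X` satisfies the hypercube UMD⁻ inequality with constant `b` for exponent `p`. -/
def UMDminusIneq (X : Type*) [NormedAddCommGroup X] [NormedSpace ℝ X] (p b : ℝ) : Prop :=
  ∀ m : ℕ, 0 < m → ∀ (π : Equiv.Perm (Fin m)) (d : Fin m → (Fin m → Bool) → X),
    (∀ i : Fin m, Epi m π ((i : ℕ) + 1) (d i) = d i ∧ Epi m π (i : ℕ) (d i) = 0) →
    cubeLpNorm m p (fun ε => ∑ i : Fin m, d i ε)
      ≤ b * (((2 : ℝ) ^ m)⁻¹ * ∑ δ : Fin m → Bool,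
        (cubeLpNorm m p fun ε => ∑ i : Fin m, sgn (δ i) • d i ε) ^ p) ^ (1 / p)

/-- The Walsh function `w_A`. -/
def walsh (n : ℕ) (A : Finset (Fin n)) (ε : Fin n → Bool) : ℝ := ∏ i ∈ A, sgn (ε i)

/-- The Walsh coefficient `f̂(A)`. -/
def walshCoeff (n : ℕ) (f : (Fin n → Bool) → X) (A : Finset (Fin n)) : X :=
  ((2 : ℝ) ^ n)⁻¹ • ∑ ε : Fin n → Bool, walsh n A ε • f ε

/-- `Δ⁻¹∂_i f = Σ_{A ∋ i} |A|⁻¹ f̂(A) w_A`. -/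
def invLapDeriv (n : ℕ) (i : Fin n) (f : (Fin n → Bool) → X) : (Fin n → Bool) → X :=
  fun ε => ∑ A ∈ univ.filter (fun A : Finset (Fin n) => i ∈ A),
    ((A.card : ℝ)⁻¹ * walsh n A ε) • walshCoeff n f A

/-! Duality. Choose functionals `G(δ, ε) ∈ X*` norming `F(δ, ε) = Σ δᵢ 𝔈ᵢ^π fᵢ(ε)`, i.e.
`G(F) = ‖F‖^p` and `‖G‖ ≤ ‖F‖^(p-1)`. Pairing against a Rademacher sum in `δ` only sees the
first-level Walsh coefficients `gᵢ(ε) = Ĝ(·, ε)({i})`, and conditional expectations are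
self-adjoint, so `‖F‖_p^p = 𝔼 ⟨Σ δᵢ 𝔈ᵢ^π gᵢ, Σ δᵢ fᵢ⟩`. Hölder, the Stein inequality in `X*` and
the Rademacher projection bound (for each fixed `ε`) bound this by
`s K ‖G‖_q ‖Σ δᵢ fᵢ‖_p ≤ s K ‖F‖_p^(p-1) ‖Σ δᵢ fᵢ‖_p`. -/

lemma mul_sum_mul_sum_comm {ι κ : Type*} [Fintype ι] [Fintype κ] (c d : ℝ) (x : ι → κ → ℝ) :
    c * ∑ i, d * ∑ j, x i j = d * ∑ j, c * ∑ i, x i j := by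
  simp only [mul_sum]
  rw [sum_comm]
  simp only [mul_left_comm]

lemma sgn_not (b : Bool) : sgn (!b) = -sgn b := by
  cases b <;> simp [sgn]

lemma sgn_mul_self (b : Bool) : sgn b * sgn b = 1 := by
  cases b <;> simp [sgn]

lemma walsh_singleton {n : ℕ} (i : Fin n) (ε : Fin n → Bool) : walsh n {i} ε = sgn (ε i) :=
  prod_singleton _ _

lemma sum_sgn_mul_sgn {ι : Type*} [Fintype ι] [DecidableEq ι] (i j : ι) :
    ∑ δ : ι → Bool, sgn (δ i) * sgn (δ j) = if i = j then (2 : ℝ) ^ Fintype.card ι else 0 := by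
  split_ifs with hij
  · subst hij
    simp [sgn_mul_self]
  · have hflip : Function.Involutive fun δ : ι → Bool => Function.update δ i (!δ i) :=
      fun δ => by simp
    have h := Equiv.sum_comp hflip.toPerm fun δ => sgn (δ i) * sgn (δ j)
    simp only [Function.Involutive.coe_toPerm, Function.update_self,
      Function.update_of_ne (Ne.symm hij), sgn_not, neg_mul, sum_neg_distrib] at h
    linarith

def rademacherSum {ι M : Type*} [Fintype ι] [AddCommMonoid M] [Module ℝ M] (a : ι → M)
    (δ : ι → Bool) : M :=
  ∑ i, sgn (δ i) • a i

lemma walshCoeff_rademacherSum {n : ℕ} (a : Fin n → X) (i : Fin n) :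
    walshCoeff n (rademacherSum a) {i} = a i := by
  simp only [walshCoeff, rademacherSum, walsh_singleton, smul_sum, smul_smul]
  rw [sum_comm]
  simp [← sum_smul, ← mul_sum, sum_sgn_mul_sgn]

lemma avg_apply_rademacherSum {n : ℕ} (G : (Fin n → Bool) → StrongDual ℝ X) (x : Fin n → X) :
    ((2 : ℝ) ^ n)⁻¹ * ∑ δ, G δ (rademacherSum x δ) = ∑ i, walshCoeff n G {i} (x i) := by
  simp only [walshCoeff, rademacherSum, walsh_singleton, map_sum, map_smul, smul_eq_mul,
    _root_.smul_apply, _root_.sum_apply, mul_sum]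
  exact sum_comm

lemma sum_apply_cubeCondExp {n : ℕ} (S : Finset (Fin n)) (φ : (Fin n → Bool) → StrongDual ℝ X)
    (f : (Fin n → Bool) → X) :
    ∑ ε, φ ε (cubeCondExp n S f ε) = ∑ ε, cubeCondExp n S φ ε (f ε) := by
  simp only [cubeCondExp, map_smul, map_sum, _root_.smul_apply, _root_.sum_apply, smul_eq_mul,
    ← mul_sum]
  simp only [sum_filter]
  rw [sum_comm]
  simp only [eq_comm]

lemma avg_rademacherSum_apply_rademacherSum {n : ℕ} (a : Fin n → StrongDual ℝ X) (x : Fin n → X) :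
    ((2 : ℝ) ^ n)⁻¹ * ∑ δ, rademacherSum a δ (rademacherSum x δ) = ∑ i, a i (x i) := by
  simp only [avg_apply_rademacherSum, walshCoeff_rademacherSum]

lemma avg_avg_apply_rademacherSum_cubeCondExp {m n : ℕ} (S : Fin m → Finset (Fin n))
    (G : (Fin m → Bool) → (Fin n → Bool) → StrongDual ℝ X) (f : Fin m → (Fin n → Bool) → X) :
    ((2 : ℝ) ^ m)⁻¹ * ∑ δ, ((2 : ℝ) ^ n)⁻¹ *
        ∑ ε, G δ ε (rademacherSum (fun i => cubeCondExp n (S i) (f i) ε) δ) =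
      ((2 : ℝ) ^ m)⁻¹ * ∑ δ, ((2 : ℝ) ^ n)⁻¹ *
        ∑ ε, rademacherSum (fun i =>
          cubeCondExp n (S i) (fun η => walshCoeff m (fun δ' => G δ' η) {i}) ε) δ
          (rademacherSum (fun i => f i ε) δ) := by
  rw [mul_sum_mul_sum_comm, mul_sum_mul_sum_comm ((2 : ℝ) ^ m)⁻¹]
  congr 1
  simp only [avg_rademacherSum_apply_rademacherSum]
  simp only [avg_apply_rademacherSum]
  rw [sum_comm]
  conv_rhs => rw [sum_comm]
  exact sum_congr rfl fun i _ => sum_apply_cubeCondExp (S i) _ (f i)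

lemma exists_dual_apply_eq_rpow {p : ℝ} (hp : p ≠ 0) (x : X) :
    ∃ φ : StrongDual ℝ X, φ x = ‖x‖ ^ p ∧ ‖φ‖ ≤ ‖x‖ ^ (p - 1) := by
  obtain ⟨g, hg, hgx⟩ := exists_dual_vector'' ℝ x
  refine ⟨‖x‖ ^ (p - 1) • g, ?_, ?_⟩
  · rw [_root_.smul_apply, hgx, smul_eq_mul, RCLike.ofReal_real_eq_id, id,
      ← Real.rpow_add_one' (norm_nonneg x) (by simpa), sub_add_cancel]
  · rw [norm_smul, Real.norm_of_nonneg (by positivity)]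
    exact mul_le_of_le_one_right (by positivity) hg

lemma le_of_rpow_le_rpow_sub_one_mul {p N C : ℝ} (hN : 0 ≤ N) (hC : 0 ≤ C)
    (h : N ^ p ≤ N ^ (p - 1) * C) : N ≤ C := by
  rcases hN.eq_or_lt with rfl | hN
  · exact hC
  · rw [Real.rpow_sub_one hN.ne', div_mul_eq_mul_div, le_div_iff₀ hN] at h
    exact le_of_mul_le_mul_left h (Real.rpow_pos_of_pos hN p)

section LpNorms

variable {E F : Type*} [NormedAddCommGroup E] [NormedAddCommGroup F] {m n : ℕ} {p q : ℝ}

lemma cubeLpNorm_nonneg (f : (Fin n → Bool) → E) : 0 ≤ cubeLpNorm n p f :=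
  Real.rpow_nonneg (by positivity) _

lemma cubeLpNorm_rpow (hp : p ≠ 0) (f : (Fin n → Bool) → E) :
    cubeLpNorm n p f ^ p = ((2 : ℝ) ^ n)⁻¹ * ∑ ε, ‖f ε‖ ^ p := by
  rw [cubeLpNorm, one_div, Real.rpow_inv_rpow (by positivity) hp]

lemma cubeAvg_norm_mul_norm_le (hpq : p.HolderConjugate q) (a : (Fin n → Bool) → E)
    (b : (Fin n → Bool) → F) :
    ((2 : ℝ) ^ n)⁻¹ * ∑ ε, ‖a ε‖ * ‖b ε‖ ≤ cubeLpNorm n p a * cubeLpNorm n q b := by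
  have hc : (0 : ℝ) ≤ ((2 : ℝ) ^ n)⁻¹ := by positivity
  have hcc : ((2 : ℝ) ^ n)⁻¹ ^ (1 / p) * ((2 : ℝ) ^ n)⁻¹ ^ (1 / q) = ((2 : ℝ) ^ n)⁻¹ := by
    rw [← Real.rpow_add' hc (by simp [hpq.inv_add_inv_eq_one]), one_div, one_div,
      hpq.inv_add_inv_eq_one, Real.rpow_one]
  calc ((2 : ℝ) ^ n)⁻¹ * ∑ ε, ‖a ε‖ * ‖b ε‖
      ≤ ((2 : ℝ) ^ n)⁻¹ * ((∑ ε, ‖a ε‖ ^ p) ^ (1 / p) * (∑ ε, ‖b ε‖ ^ q) ^ (1 / q)) := by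
        gcongr
        exact Real.inner_le_Lp_mul_Lq_of_nonneg _ hpq (fun _ _ => norm_nonneg _)
          fun _ _ => norm_nonneg _
    _ = cubeLpNorm n p a * cubeLpNorm n q b := by
        rw [cubeLpNorm, cubeLpNorm, Real.mul_rpow hc (by positivity),
          Real.mul_rpow hc (by positivity), mul_mul_mul_comm, hcc]

lemma cubeAvg_apply_le [NormedSpace ℝ E] (hpq : p.HolderConjugate q)
    (φ : (Fin n → Bool) → StrongDual ℝ E) (x : (Fin n → Bool) → E) :
    ((2 : ℝ) ^ n)⁻¹ * ∑ ε, φ ε (x ε) ≤ cubeLpNorm n q φ * cubeLpNorm n p x := by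
  refine le_trans ?_ (cubeAvg_norm_mul_norm_le hpq.symm φ x)
  gcongr with ε
  exact (Real.le_norm_self _).trans ((φ ε).le_opNorm (x ε))

/-- The norm of `L_p(𝒞_m; L_p(𝒞_n; E))`, in which `SteinIneq` measures Rademacher sums. -/
def cubeLpLpNorm (m n : ℕ) (p : ℝ) (H : (Fin m → Bool) → (Fin n → Bool) → E) : ℝ :=
  (((2 : ℝ) ^ m)⁻¹ * ∑ δ, cubeLpNorm n p (H δ) ^ p) ^ (1 / p)

lemma cubeAvg_cubeLpNorm_rpow_nonneg (H : (Fin m → Bool) → (Fin n → Bool) → E) :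
    0 ≤ ((2 : ℝ) ^ m)⁻¹ * ∑ δ, cubeLpNorm n p (H δ) ^ p :=
  mul_nonneg (by positivity) (sum_nonneg fun _ _ => Real.rpow_nonneg (cubeLpNorm_nonneg _) _)

lemma cubeLpLpNorm_nonneg (H : (Fin m → Bool) → (Fin n → Bool) → E) :
    0 ≤ cubeLpLpNorm m n p H :=
  Real.rpow_nonneg (cubeAvg_cubeLpNorm_rpow_nonneg H) _

lemma cubeLpLpNorm_eq (hp : p ≠ 0) (H : (Fin m → Bool) → (Fin n → Bool) → E) :
    cubeLpLpNorm m n p H =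
      (((2 : ℝ) ^ m)⁻¹ * ∑ δ, ((2 : ℝ) ^ n)⁻¹ * ∑ ε, ‖H δ ε‖ ^ p) ^ (1 / p) := by
  simp only [cubeLpLpNorm, cubeLpNorm_rpow hp]

lemma cubeLpLpNorm_rpow (hp : p ≠ 0) (H : (Fin m → Bool) → (Fin n → Bool) → E) :
    cubeLpLpNorm m n p H ^ p = ((2 : ℝ) ^ m)⁻¹ * ∑ δ, ((2 : ℝ) ^ n)⁻¹ * ∑ ε, ‖H δ ε‖ ^ p := by
  rw [cubeLpLpNorm_eq hp, one_div, Real.rpow_inv_rpow (by positivity) hp]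

lemma cubeLpLpNorm_comm (hp : p ≠ 0) (H : (Fin m → Bool) → (Fin n → Bool) → E) :
    cubeLpLpNorm m n p H = cubeLpLpNorm n m p fun ε δ => H δ ε := by
  rw [cubeLpLpNorm_eq hp, cubeLpLpNorm_eq hp, mul_sum_mul_sum_comm]

lemma cubeLpNorm_cubeLpNorm (H : (Fin m → Bool) → (Fin n → Bool) → E) :
    cubeLpNorm m p (fun δ => cubeLpNorm n p (H δ)) = cubeLpLpNorm m n p H := by
  rw [cubeLpLpNorm, cubeLpNorm]
  simp only [Real.norm_of_nonneg (cubeLpNorm_nonneg _)]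

lemma cubeLpLpNorm_le_mul (hp : 0 < p) {K : ℝ} (hK : 0 ≤ K)
    {H : (Fin m → Bool) → (Fin n → Bool) → E} {H' : (Fin m → Bool) → (Fin n → Bool) → F}
    (h : ∀ δ, cubeLpNorm n p (H δ) ≤ K * cubeLpNorm n p (H' δ)) :
    cubeLpLpNorm m n p H ≤ K * cubeLpLpNorm m n p H' := by
  have hsum : ((2 : ℝ) ^ m)⁻¹ * ∑ δ, cubeLpNorm n p (H δ) ^ p ≤
      K ^ p * (((2 : ℝ) ^ m)⁻¹ * ∑ δ, cubeLpNorm n p (H' δ) ^ p) :=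
    calc ((2 : ℝ) ^ m)⁻¹ * ∑ δ, cubeLpNorm n p (H δ) ^ p
        ≤ ((2 : ℝ) ^ m)⁻¹ * ∑ δ, (K * cubeLpNorm n p (H' δ)) ^ p := by
          gcongr with δ
          exacts [cubeLpNorm_nonneg _, h δ]
      _ = K ^ p * (((2 : ℝ) ^ m)⁻¹ * ∑ δ, cubeLpNorm n p (H' δ) ^ p) := by
          simp only [Real.mul_rpow hK (cubeLpNorm_nonneg _), ← mul_sum]
          ring
  calc cubeLpLpNorm m n p H
      ≤ (K ^ p * (((2 : ℝ) ^ m)⁻¹ * ∑ δ, cubeLpNorm n p (H' δ) ^ p)) ^ (1 / p) :=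
        Real.rpow_le_rpow (cubeAvg_cubeLpNorm_rpow_nonneg H) hsum (by positivity)
    _ = K * cubeLpLpNorm m n p H' := by
        rw [Real.mul_rpow (by positivity) (cubeAvg_cubeLpNorm_rpow_nonneg H'),
          ← Real.rpow_mul hK, mul_one_div_cancel hp.ne', Real.rpow_one, cubeLpLpNorm]

lemma cubeAvg_avg_apply_le [NormedSpace ℝ E] (hpq : p.HolderConjugate q)
    (U : (Fin m → Bool) → (Fin n → Bool) → StrongDual ℝ E)
    (V : (Fin m → Bool) → (Fin n → Bool) → E) :
    ((2 : ℝ) ^ m)⁻¹ * ∑ δ, ((2 : ℝ) ^ n)⁻¹ * ∑ ε, U δ ε (V δ ε) ≤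
      cubeLpLpNorm m n q U * cubeLpLpNorm m n p V := by
  rw [← cubeLpNorm_cubeLpNorm, ← cubeLpNorm_cubeLpNorm]
  refine le_trans ?_ (cubeAvg_norm_mul_norm_le hpq.symm _ _)
  gcongr _ * ∑ δ, ?_ with δ
  rw [Real.norm_of_nonneg (cubeLpNorm_nonneg _), Real.norm_of_nonneg (cubeLpNorm_nonneg _)]
  exact cubeAvg_apply_le hpq (U δ) (V δ)

lemma cubeLpLpNorm_le_rpow_sub_one (hpq : p.HolderConjugate q)
    {G : (Fin m → Bool) → (Fin n → Bool) → E} {H : (Fin m → Bool) → (Fin n → Bool) → F}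
    (h : ∀ δ ε, ‖G δ ε‖ ≤ ‖H δ ε‖ ^ (p - 1)) :
    cubeLpLpNorm m n q G ≤ cubeLpLpNorm m n p H ^ (p - 1) := by
  have hGH (δ ε) : ‖G δ ε‖ ^ q ≤ ‖H δ ε‖ ^ p := by
    calc ‖G δ ε‖ ^ q ≤ (‖H δ ε‖ ^ (p - 1)) ^ q :=
          Real.rpow_le_rpow (norm_nonneg _) (h δ ε) hpq.symm.nonneg
      _ = ‖H δ ε‖ ^ p := by rw [← Real.rpow_mul (norm_nonneg _), hpq.sub_one_mul_conj]
  have hH : cubeLpLpNorm m n p H ^ (p - 1) = (cubeLpLpNorm m n p H ^ p) ^ (1 / q) := by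
    rw [← Real.rpow_mul (cubeLpLpNorm_nonneg _), mul_one_div, hpq.div_conj_eq_sub_one]
  rw [hH, cubeLpLpNorm_eq hpq.symm.ne_zero, cubeLpLpNorm_rpow hpq.ne_zero]
  gcongr with δ _ ε
  · exact one_div_nonneg.2 hpq.symm.nonneg
  · exact hGH δ ε

lemma cubeLpLpNorm_rademacherSum_walshCoeff_le [NormedSpace ℝ E] (hp : 0 < p) {K : ℝ}
    (hK : 0 ≤ K)
    (hRad : ∀ G : (Fin m → Bool) → E,
      cubeLpNorm m p (fun δ => ∑ i, walsh m {i} δ • walshCoeff m G {i}) ≤ K * cubeLpNorm m p G)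
    (G : (Fin m → Bool) → (Fin n → Bool) → E) :
    cubeLpLpNorm m n p (fun δ ε => rademacherSum (fun i => walshCoeff m (G · ε) {i}) δ) ≤
      K * cubeLpLpNorm m n p G := by
  rw [cubeLpLpNorm_comm hp.ne', cubeLpLpNorm_comm hp.ne' G]
  refine cubeLpLpNorm_le_mul hp hK fun ε => ?_
  simpa only [walsh_singleton, rademacherSum] using hRad (G · ε)

end LpNorms

theorem stein_of_dual_stein_general (p : ℝ) (hp : 1 < p) (s K : ℝ) (hs : 0 < s) (hK : 0 < K)
    (X : Type*) [NormedAddCommGroup X] [NormedSpace ℝ X]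
    (hStein : SteinIneq (StrongDual ℝ X) (p / (p - 1)) s)
    (hRad : ∀ n : ℕ, 0 < n → ∀ G : (Fin n → Bool) → StrongDual ℝ X,
      cubeLpNorm n (p / (p - 1))
          (fun ε => ∑ i : Fin n, walsh n {i} ε • walshCoeff n G {i})
        ≤ K * cubeLpNorm n (p / (p - 1)) G) :
    SteinIneq X p (K * s) := by
  intro m hm π f
  have hpq : p.HolderConjugate (p / (p - 1)) := .conjExponent hp
  set q := p / (p - 1)
  set F : (Fin m → Bool) → (Fin m → Bool) → X := fun δ ε =>
    rademacherSum (fun i : Fin m => Epi m π ((i : ℕ) + 1) (f i) ε) δ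
  set V : (Fin m → Bool) → (Fin m → Bool) → X := fun δ ε => rademacherSum (f · ε) δ
  change cubeLpLpNorm m m p F ≤ K * s * cubeLpLpNorm m m p V
  choose G hGF hG using fun δ ε => exists_dual_apply_eq_rpow hpq.ne_zero (F δ ε)
  set g : Fin m → (Fin m → Bool) → StrongDual ℝ X := fun i ε => walshCoeff m (G · ε) {i}
  set U : (Fin m → Bool) → (Fin m → Bool) → StrongDual ℝ X := fun δ ε =>
    rademacherSum (fun i : Fin m => Epi m π ((i : ℕ) + 1) (g i) ε) δ
  have hV := cubeLpLpNorm_nonneg (p := p) V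
  refine le_of_rpow_le_rpow_sub_one_mul (p := p) (cubeLpLpNorm_nonneg F) (by positivity) ?_
  calc cubeLpLpNorm m m p F ^ p
      = ((2 : ℝ) ^ m)⁻¹ * ∑ δ, ((2 : ℝ) ^ m)⁻¹ * ∑ ε, G δ ε (F δ ε) := by
        simp only [cubeLpLpNorm_rpow hpq.ne_zero, hGF]
    _ = ((2 : ℝ) ^ m)⁻¹ * ∑ δ, ((2 : ℝ) ^ m)⁻¹ * ∑ ε, U δ ε (V δ ε) :=
        avg_avg_apply_rademacherSum_cubeCondExp _ G f
    _ ≤ cubeLpLpNorm m m q U * cubeLpLpNorm m m p V := cubeAvg_avg_apply_le hpq U V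
    _ ≤ s * cubeLpLpNorm m m q (fun δ ε => rademacherSum (g · ε) δ) * cubeLpLpNorm m m p V := by
        gcongr
        exact hStein m hm π g
    _ ≤ s * (K * cubeLpLpNorm m m q G) * cubeLpLpNorm m m p V := by
        gcongr
        exact cubeLpLpNorm_rademacherSum_walshCoeff_le hpq.symm.pos hK.le (hRad m hm) G
    _ ≤ s * (K * cubeLpLpNorm m m p F ^ (p - 1)) * cubeLpLpNorm m m p V := by
        gcongr
        exact cubeLpLpNorm_le_rpow_sub_one hpq hG
    _ = cubeLpLpNorm m m p F ^ (p - 1) * (K * s * cubeLpLpNorm m m p V) := by ring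

/-- Duality (Proposition `fact:hn1` of the paper): if the dual `X*` satisfies the hypercube
Stein inequality with constant `s` for the conjugate exponent `q = p/(p−1)` and the Rademacher
projection bound with constant `K` for exponent `q`, then `X` satisfies the hypercube Stein
inequality with constant `K·s` for exponent `p`. -/
theorem stein_of_dual_stein (p : ℝ) (hp : 1 < p) (s K : ℝ) (hs : 0 < s) (hK : 0 < K)
    (X : Type*) [NormedAddCommGroup X] [NormedSpace ℝ X] [CompleteSpace X]
    (hStein : SteinIneq (StrongDual ℝ X) (p / (p - 1)) s)
    (hRad : ∀ n : ℕ, 0 < n → ∀ G : (Fin n → Bool) → StrongDual ℝ X,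
      cubeLpNorm n (p / (p - 1))
          (fun ε => ∑ i : Fin n, walsh n {i} ε • walshCoeff n G {i})
        ≤ K * cubeLpNorm n (p / (p - 1)) G) :
    SteinIneq X p (K * s) :=
  stein_of_dual_stein_general p hp s K hs hK X hStein hRad
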